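/- Let λ ∈ ℝ and let Z̃ = (X̃; Ũ) be a conjoined basis of (S_λ) with X̃ₖ invertible for every k ∈ ℕ; let Λ, X̂, Û, Ẑ be as in the dominant-solution construction (Λₖ = Σ_{j=0}^{k−1}(−X̃_j^{−1} ℬ_j (X̃_{j+1}*)^{−1}), X̂ = X̃Λ, Û = ŨΛ + (X̃*)^{−1}). Let m ∈ ℕ be such that Λ_m (equivalently X̂_m) is invertible, define Z^{(m)} := Z̃ − Ẑ X̂_m^{−1} X̃_m, fix j ∈ {1,…,n}, and define z : ℕ → ℂ^{2n} by zₖ = Z^{(m)}ₖ e_j for k ≤ m and zₖ = 0 for k > m, and f : ℕ → ℂ^{2n} by fₖ = 0 for k ≠ m and f_m = ( −𝒲_m^{−1} (X̂_m*)^{−1} e_j ; 0 ). Then Z^{(m)}_m = (0; −(X̂_m*)^{−1}) and 𝒥(zₖ − 𝒮ₖ z_{k+1}) = Ψₖ (λ zₖ + fₖ) holds for every k ∈ ℕ. -/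

import Mathlib

open Matrix Filter
open scoped ComplexOrder

noncomputable def Jmat (n : ℕ) : Matrix (Fin n ⊕ Fin n) (Fin n ⊕ Fin n) ℂ :=
  Matrix.fromBlocks 0 1 (-1) 0

noncomputable def PsiMat {n : ℕ} (W : ℕ → Matrix (Fin n) (Fin n) ℂ) (k : ℕ) :
    Matrix (Fin n ⊕ Fin n) (Fin n ⊕ Fin n) ℂ :=
  Matrix.fromBlocks (W k) 0 0 0

noncomputable def Vmat {n : ℕ} (S : ℕ → Matrix (Fin n ⊕ Fin n) (Fin n ⊕ Fin n) ℂ)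
    (W : ℕ → Matrix (Fin n) (Fin n) ℂ) (k : ℕ) :
    Matrix (Fin n ⊕ Fin n) (Fin n ⊕ Fin n) ℂ :=
  -(Jmat n * PsiMat W k * S k)

/-- `Z` is a conjoined basis of system `(S_ν)`: a `2n×n` matrix solution with
`rank Zₖ = n` and `Zₖ* 𝒥 Zₖ = 0` for all `k`. -/
def IsConjoinedBasis {n : ℕ} (S : ℕ → Matrix (Fin n ⊕ Fin n) (Fin n ⊕ Fin n) ℂ)
    (W : ℕ → Matrix (Fin n) (Fin n) ℂ) (nu : ℝ)
    (Z : ℕ → Matrix (Fin n ⊕ Fin n) (Fin n) ℂ) : Prop :=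
  (∀ k, Z k = (S k + (nu : ℂ) • Vmat S W k) * Z (k + 1)) ∧
    ∀ k, (Z k).rank = n ∧ (Z k)ᴴ * Jmat n * Z k = 0

/-- `Z̃ = (X̃; Ũ)` is a recessive solution of `(S_ν)`: a conjoined basis such that for all
sufficiently large `k` the matrix `X̃ₖ` is invertible with `−X̃ₖ⁻¹ ℬₖ (X̃_{k+1}*)⁻¹ ≥ 0`,
and for every conjoined basis `Z = (X; U)` normalized with `Z̃` (i.e. `Zₖ* 𝒥 Z̃ₖ = I`),
the matrix `Xₖ` is invertible for all large `k` and `Xₖ⁻¹ X̃ₖ → 0` as `k → ∞`. -/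
def IsRecessive {n : ℕ} (S : ℕ → Matrix (Fin n ⊕ Fin n) (Fin n ⊕ Fin n) ℂ)
    (W B : ℕ → Matrix (Fin n) (Fin n) ℂ) (nu : ℝ)
    (Xt Ut : ℕ → Matrix (Fin n) (Fin n) ℂ) : Prop :=
  IsConjoinedBasis S W nu (fun k => Matrix.fromRows (Xt k) (Ut k)) ∧
    (∃ k₀ : ℕ, ∀ k, k₀ ≤ k →
      IsUnit (Xt k) ∧ (-((Xt k)⁻¹ * B k * ((Xt (k + 1))ᴴ)⁻¹)).PosSemidef) ∧
    ∀ X U : ℕ → Matrix (Fin n) (Fin n) ℂ,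
      IsConjoinedBasis S W nu (fun k => Matrix.fromRows (X k) (U k)) →
      (∀ k, (Matrix.fromRows (X k) (U k))ᴴ * Jmat n * Matrix.fromRows (Xt k) (Ut k) = 1) →
      (∃ k₁ : ℕ, ∀ k, k₁ ≤ k → IsUnit (X k)) ∧
        Filter.Tendsto (fun k => (X k)⁻¹ * Xt k) Filter.atTop (nhds 0)

/-- The system is eventually controllable: there is `N` such that on any finite subinterval
`{K,…,M}` of `[N,∞)` the only `u` with `0 = ℬₖ u_{k+1}` and `uₖ = 𝒟ₖ u_{k+1}` for all
`k ∈ {K,…,M−1}` is the trivial one. -/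
def EventuallyControllable {n : ℕ} (B D : ℕ → Matrix (Fin n) (Fin n) ℂ) : Prop :=
  ∃ N : ℕ, ∀ K M : ℕ, N ≤ K → K < M →
    ∀ u : ℕ → Fin n → ℂ,
      (∀ k, K ≤ k → k < M → B k *ᵥ u (k + 1) = 0 ∧ u k = D k *ᵥ u (k + 1)) →
      ∀ k, K ≤ k → k ≤ M → u k = 0

/-- The strong Atkinson (definiteness) condition: there are `λ₀ ∈ ℂ` and `a ≤ b` in `ℕ`
such that every solution `z` of `(S_{λ₀})` with `Σ_{k=a}^{b} zₖ*Ψₖzₖ = 0` vanishes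
identically. -/
def StrongAtkinson {n : ℕ} (S : ℕ → Matrix (Fin n ⊕ Fin n) (Fin n ⊕ Fin n) ℂ)
    (W : ℕ → Matrix (Fin n) (Fin n) ℂ) : Prop :=
  ∃ (lam0 : ℂ) (a b : ℕ), a ≤ b ∧
    ∀ z : ℕ → (Fin n ⊕ Fin n) → ℂ,
      (∀ k, z k = (S k + lam0 • Vmat S W k) *ᵥ z (k + 1)) →
      (∑ k ∈ Finset.Icc a b, star (z k) ⬝ᵥ (PsiMat W k *ᵥ z k)) = 0 →
      ∀ k, z k = 0

/-- `Λₖ = Σ_{j=0}^{k−1} (−X̃_j⁻¹ ℬ_j (X̃_{j+1}*)⁻¹)` (so `Λ₀ = 0`). -/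
noncomputable def LamMat {n : ℕ} (B Xt : ℕ → Matrix (Fin n) (Fin n) ℂ) (k : ℕ) :
    Matrix (Fin n) (Fin n) ℂ :=
  ∑ j ∈ Finset.range k, -((Xt j)⁻¹ * B j * ((Xt (j + 1))ᴴ)⁻¹)

/-- `X̂ₖ = X̃ₖ Λₖ`. -/
noncomputable def Xhat {n : ℕ} (B Xt : ℕ → Matrix (Fin n) (Fin n) ℂ) (k : ℕ) :
    Matrix (Fin n) (Fin n) ℂ :=
  Xt k * LamMat B Xt k

/-- `Ûₖ = Ũₖ Λₖ + (X̃ₖ*)⁻¹`. -/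
noncomputable def Uhat {n : ℕ} (B Xt Ut : ℕ → Matrix (Fin n) (Fin n) ℂ) (k : ℕ) :
    Matrix (Fin n) (Fin n) ℂ :=
  Ut k * LamMat B Xt k + ((Xt k)ᴴ)⁻¹

/-- `Z^{(m)} := Z̃ − Ẑ X̂_m⁻¹ X̃_m`. -/
noncomputable def Zsolm {n : ℕ} (B Xt Ut : ℕ → Matrix (Fin n) (Fin n) ℂ) (m k : ℕ) :
    Matrix (Fin n ⊕ Fin n) (Fin n) ℂ :=
  Matrix.fromRows (Xt k) (Ut k) -
    Matrix.fromRows (Xhat B Xt k) (Uhat B Xt Ut k) * ((Xhat B Xt m)⁻¹ * Xt m)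

/-!
Put `S_λ = S + λV`. Since `𝒥V = ΨS` and `Ψ𝒥Ψ = 0`, the matrix `S_λ` is again symplectic, with the
same upper blocks `A, B` as `S`. Its inverse `-𝒥 S_λ* 𝒥` yields `A B* = B A*` and the backward
recursion `X̃_{k+1} = D_λ* X̃_k - B* Ũ_k`. Together with the Hermitian Riccati quantity `Ũ X̃⁻¹`
these make every increment of `Λ` Hermitian and make `Ẑ = Z̃ Λ + (0; (X̃*)⁻¹)` a solution, so
`Z^{(m)}` is a solution whose upper block vanishes at `k = m`. For `k < m` the equation for `z` is
`(S_λ)` multiplied by `𝒥`, using `ΨV = 0`; at `k = m` the forcing term `f_m` absorbs the jump of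
`z` to `0`.
-/

section Jmat

variable {n : ℕ}

lemma Jmat_mul_Jmat : Jmat n * Jmat n = -1 := by
  rw [Jmat, fromBlocks_multiply, ← fromBlocks_one, fromBlocks_neg]
  simp

lemma conjTranspose_Jmat : (Jmat n)ᴴ = -Jmat n := by
  rw [Jmat, fromBlocks_conjTranspose, fromBlocks_neg]
  simp

lemma Jmat_mulVec (x : Fin n ⊕ Fin n → ℂ) :
    Jmat n *ᵥ x = Sum.elim (x ∘ Sum.inr) (-(x ∘ Sum.inl)) := by
  rw [Jmat, fromBlocks_mulVec]
  simp [neg_mulVec]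

lemma conjTranspose_fromRows_mul_Jmat_mul_fromRows (X U : Matrix (Fin n) (Fin n) ℂ) :
    (fromRows X U)ᴴ * Jmat n * fromRows X U = Xᴴ * U - Uᴴ * X := by
  rw [conjTranspose_fromRows_eq_fromCols_conjTranspose, Jmat, Matrix.mul_assoc,
    fromBlocks_mul_fromRows, fromCols_mul_fromRows]
  simp [sub_eq_add_neg]

end Jmat

section PsiMat

variable {n : ℕ} (W : ℕ → Matrix (Fin n) (Fin n) ℂ) (k : ℕ)

lemma PsiMat_mul_Jmat_mul_PsiMat : PsiMat W k * Jmat n * PsiMat W k = 0 := by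
  rw [PsiMat, Jmat, fromBlocks_multiply, fromBlocks_multiply]
  simp

lemma PsiMat_mulVec (x : Fin n ⊕ Fin n → ℂ) :
    PsiMat W k *ᵥ x = Sum.elim (W k *ᵥ (x ∘ Sum.inl)) 0 := by
  rw [PsiMat, fromBlocks_mulVec]
  simp

lemma conjTranspose_PsiMat (hW : (W k).IsHermitian) : (PsiMat W k)ᴴ = PsiMat W k := by
  rw [PsiMat, fromBlocks_conjTranspose, hW.eq]
  simp

variable (S : ℕ → Matrix (Fin n ⊕ Fin n) (Fin n ⊕ Fin n) ℂ)

lemma Jmat_mul_Vmat : Jmat n * Vmat S W k = PsiMat W k * S k := by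
  rw [Vmat, Matrix.mul_neg, ← Matrix.mul_assoc, ← Matrix.mul_assoc, Jmat_mul_Jmat]
  simp

lemma PsiMat_mul_Vmat : PsiMat W k * Vmat S W k = 0 := by
  rw [Vmat, Matrix.mul_neg, ← Matrix.mul_assoc, ← Matrix.mul_assoc,
    PsiMat_mul_Jmat_mul_PsiMat, Matrix.zero_mul, neg_zero]

lemma add_smul_Vmat_eq_fromBlocks {A B C D : Matrix (Fin n) (Fin n) ℂ}
    (hS : S k = fromBlocks A B C D) (l : ℂ) :
    S k + l • Vmat S W k = fromBlocks A B (C + l • (W k * A)) (D + l • (W k * B)) := by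
  rw [Vmat, PsiMat, Jmat, hS, fromBlocks_multiply, fromBlocks_multiply, fromBlocks_neg,
    fromBlocks_smul, fromBlocks_add]
  simp

/-- The cross terms cancel since `𝒥 V = Ψ S`, and the quadratic term vanishes since `Ψ 𝒥 Ψ = 0`. -/
lemma symplectic_add_smul_Vmat (hS : (S k)ᴴ * Jmat n * S k = Jmat n)
    (hW : (W k).IsHermitian) {l : ℂ} (hl : star l = l) :
    (S k + l • Vmat S W k)ᴴ * Jmat n * (S k + l • Vmat S W k) = Jmat n := by
  have hVJ : (Vmat S W k)ᴴ * Jmat n = -((S k)ᴴ * PsiMat W k) := by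
    rw [Vmat, conjTranspose_neg, conjTranspose_mul, conjTranspose_mul, conjTranspose_Jmat,
      conjTranspose_PsiMat W k hW]
    simp [Matrix.mul_assoc, Jmat_mul_Jmat]
  calc (S k + l • Vmat S W k)ᴴ * Jmat n * (S k + l • Vmat S W k)
      = (S k)ᴴ * Jmat n * S k + l • ((S k)ᴴ * (Jmat n * Vmat S W k))
          + l • ((Vmat S W k)ᴴ * Jmat n * S k)
          + (l * l) • ((Vmat S W k)ᴴ * Jmat n * Vmat S W k) := by
        simp only [conjTranspose_add, conjTranspose_smul, hl, Matrix.add_mul, Matrix.mul_add,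
          Matrix.smul_mul, Matrix.mul_smul, smul_add, smul_smul, Matrix.mul_assoc]
        abel
    _ = Jmat n := by
        rw [hS, Jmat_mul_Vmat, hVJ]
        simp [Matrix.mul_assoc, PsiMat_mul_Vmat]

end PsiMat

section Symplectic

variable {n : ℕ} {A B C D : Matrix (Fin n) (Fin n) ℂ}

lemma fromBlocks_inv_mul_self_of_symplectic
    (h : (fromBlocks A B C D)ᴴ * Jmat n * fromBlocks A B C D = Jmat n) :
    fromBlocks Dᴴ (-Bᴴ) (-Cᴴ) Aᴴ * fromBlocks A B C D = 1 := by
  have hinv : fromBlocks Dᴴ (-Bᴴ) (-Cᴴ) Aᴴ = -(Jmat n * (fromBlocks A B C D)ᴴ * Jmat n) := by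
    rw [Jmat, fromBlocks_conjTranspose, fromBlocks_multiply, fromBlocks_multiply, fromBlocks_neg]
    simp
  rw [hinv, Matrix.neg_mul, Matrix.mul_assoc, Matrix.mul_assoc, ← Matrix.mul_assoc _ (Jmat n), h,
    Jmat_mul_Jmat, neg_neg]

lemma mul_conjTranspose_comm_of_symplectic
    (h : (fromBlocks A B C D)ᴴ * Jmat n * fromBlocks A B C D = Jmat n) :
    A * Bᴴ = B * Aᴴ := by
  have h' := mul_eq_one_comm.mp (fromBlocks_inv_mul_self_of_symplectic h)
  rw [fromBlocks_multiply, ← fromBlocks_one, fromBlocks_inj] at h'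
  rw [← sub_eq_zero, ← neg_eq_zero, ← h'.2.1]
  simp [sub_eq_add_neg, add_comm]

end Symplectic

section Riccati

variable {n : ℕ}

lemma isHermitian_mul_inv_of_conjTranspose_mul_comm {X U : Matrix (Fin n) (Fin n) ℂ}
    (hXU : Xᴴ * U = Uᴴ * X) (hX : IsUnit X) : (U * X⁻¹).IsHermitian := by
  have hd := (isUnit_iff_isUnit_det X).1 hX
  have hdh : IsUnit Xᴴ.det := by rw [det_conjTranspose]; exact hd.star
  rw [IsHermitian, conjTranspose_mul, conjTranspose_nonsing_inv]
  calc (Xᴴ)⁻¹ * Uᴴ = (Xᴴ)⁻¹ * (Uᴴ * X * X⁻¹) := by rw [mul_nonsing_inv_cancel_right _ _ hd]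
    _ = U * X⁻¹ := by
      rw [← hXU, Matrix.mul_assoc, ← Matrix.mul_assoc, nonsing_inv_mul _ hdh, Matrix.one_mul]

/-- With `P = U₁ X₁⁻¹` Hermitian, `X X₁⁻¹ = A + B P`, so `B (X₁ᴴ)⁻¹ Xᴴ = B Aᴴ + B P Bᴴ` is
Hermitian. -/
lemma isHermitian_inv_mul_mul_conjTranspose_inv {X X₁ U₁ A B : Matrix (Fin n) (Fin n) ℂ}
    (hrec : X = A * X₁ + B * U₁) (hAB : A * Bᴴ = B * Aᴴ) (hP : (U₁ * X₁⁻¹).IsHermitian)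
    (hX : IsUnit X) (hX₁ : IsUnit X₁) : (X⁻¹ * B * (X₁ᴴ)⁻¹).IsHermitian := by
  have hd := (isUnit_iff_isUnit_det X).1 hX
  have hd₁ := (isUnit_iff_isUnit_det X₁).1 hX₁
  have hXX₁ : X * X₁⁻¹ = A + B * (U₁ * X₁⁻¹) := by
    rw [hrec, Matrix.add_mul, mul_nonsing_inv_cancel_right _ _ hd₁, Matrix.mul_assoc]
  have hH : (B * Aᴴ + B * (U₁ * X₁⁻¹) * Bᴴ).IsHermitian := by
    refine IsHermitian.add ?_ (isHermitian_mul_mul_conjTranspose B hP)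
    rw [IsHermitian, conjTranspose_mul, conjTranspose_conjTranspose, hAB]
  have hHX : B * Aᴴ + B * (U₁ * X₁⁻¹) * Bᴴ = B * (X * X₁⁻¹)ᴴ := by
    rw [hXX₁, conjTranspose_add, conjTranspose_mul, hP.eq, Matrix.mul_add, Matrix.mul_assoc]
  have key : X⁻¹ * B * (X₁ᴴ)⁻¹ = X⁻¹ * (B * Aᴴ + B * (U₁ * X₁⁻¹) * Bᴴ) * X⁻¹ᴴ := by
    rw [hHX]
    simp only [Matrix.mul_assoc]
    rw [← conjTranspose_mul, ← Matrix.mul_assoc X⁻¹ X, nonsing_inv_mul _ hd, Matrix.one_mul,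
      conjTranspose_nonsing_inv]
  rw [key]
  exact isHermitian_mul_mul_conjTranspose X⁻¹ hH

end Riccati

lemma fromRows_eq_fromBlocks_mul_fromRows_iff {R m₁ m₂ n₁ n₂ ι : Type*} [Semiring R]
    [Fintype n₁] [Fintype n₂] {X : Matrix m₁ ι R} {U : Matrix m₂ ι R} {X₁ : Matrix n₁ ι R}
    {U₁ : Matrix n₂ ι R} {A : Matrix m₁ n₁ R} {B : Matrix m₁ n₂ R} {C : Matrix m₂ n₁ R}
    {D : Matrix m₂ n₂ R} :
    fromRows X U = fromBlocks A B C D * fromRows X₁ U₁ ↔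
      X = A * X₁ + B * U₁ ∧ U = C * X₁ + D * U₁ := by
  rw [fromBlocks_mul_fromRows, fromRows_ext_iff]

lemma fromRows_sub_fromRows {R m₁ m₂ ι : Type*} [Sub R] (X X' : Matrix m₁ ι R)
    (U U' : Matrix m₂ ι R) : fromRows X U - fromRows X' U' = fromRows (X - X') (U - U') := by
  ext (i | i) j <;> rfl

lemma eq_conjTranspose_mul_sub_of_symplectic {n : ℕ}
    {X U X₁ U₁ A B C D : Matrix (Fin n) (Fin n) ℂ}
    (hrec : fromRows X U = fromBlocks A B C D * fromRows X₁ U₁)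
    (hS : (fromBlocks A B C D)ᴴ * Jmat n * fromBlocks A B C D = Jmat n) :
    X₁ = Dᴴ * X - Bᴴ * U := by
  have h := congrArg (fromBlocks Dᴴ (-Bᴴ) (-Cᴴ) Aᴴ * ·) hrec
  simp only [← Matrix.mul_assoc, fromBlocks_inv_mul_self_of_symplectic hS, Matrix.one_mul] at h
  rw [(fromRows_eq_fromBlocks_mul_fromRows_iff.1 h.symm).1, Matrix.neg_mul, sub_eq_add_neg]

section DominantSolution

variable {n : ℕ} {A B C D Xt Ut : ℕ → Matrix (Fin n) (Fin n) ℂ}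

lemma LamMat_eq_LamMat_succ_add (k : ℕ) :
    LamMat B Xt k = LamMat B Xt (k + 1) + (Xt k)⁻¹ * B k * ((Xt (k + 1))ᴴ)⁻¹ := by
  rw [LamMat, LamMat, Finset.sum_range_succ]
  abel

lemma isHermitian_LamMat
    (hrec : ∀ k, fromRows (Xt k) (Ut k) =
      fromBlocks (A k) (B k) (C k) (D k) * fromRows (Xt (k + 1)) (Ut (k + 1)))
    (hS : ∀ k, (fromBlocks (A k) (B k) (C k) (D k))ᴴ * Jmat n *
      fromBlocks (A k) (B k) (C k) (D k) = Jmat n)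
    (hXU : ∀ k, (Xt k)ᴴ * Ut k = (Ut k)ᴴ * Xt k) (hX : ∀ k, IsUnit (Xt k)) (k : ℕ) :
    (LamMat B Xt k).IsHermitian := by
  have hQ : ∀ j, ((Xt j)⁻¹ * B j * ((Xt (j + 1))ᴴ)⁻¹).IsHermitian := fun j =>
    isHermitian_inv_mul_mul_conjTranspose_inv
      (fromRows_eq_fromBlocks_mul_fromRows_iff.1 (hrec j)).1
      (mul_conjTranspose_comm_of_symplectic (hS j))
      (isHermitian_mul_inv_of_conjTranspose_mul_comm (hXU (j + 1)) (hX (j + 1)))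
      (hX j) (hX (j + 1))
  rw [isHermitian_iff_isSelfAdjoint]
  exact isSelfAdjoint_sum _ fun j _ => (isHermitian_iff_isSelfAdjoint.1 (hQ j).neg)

lemma fromRows_Xhat_Uhat_eq_mul
    (hrec : ∀ k, fromRows (Xt k) (Ut k) =
      fromBlocks (A k) (B k) (C k) (D k) * fromRows (Xt (k + 1)) (Ut (k + 1)))
    (hS : ∀ k, (fromBlocks (A k) (B k) (C k) (D k))ᴴ * Jmat n *
      fromBlocks (A k) (B k) (C k) (D k) = Jmat n)
    (hXU : ∀ k, (Xt k)ᴴ * Ut k = (Ut k)ᴴ * Xt k) (hX : ∀ k, IsUnit (Xt k)) (k : ℕ) :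
    fromRows (Xhat B Xt k) (Uhat B Xt Ut k) =
      fromBlocks (A k) (B k) (C k) (D k) *
        fromRows (Xhat B Xt (k + 1)) (Uhat B Xt Ut (k + 1)) := by
  obtain ⟨hXk, hUk⟩ := fromRows_eq_fromBlocks_mul_fromRows_iff.1 (hrec k)
  have hd := (isUnit_iff_isUnit_det _).1 (hX k)
  have hdh : IsUnit (Xt k)ᴴ.det := by rw [det_conjTranspose]; exact hd.star
  have hdh₁ : IsUnit (Xt (k + 1))ᴴ.det := by
    rw [det_conjTranspose]; exact ((isUnit_iff_isUnit_det _).1 (hX (k + 1))).star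
  have hP : Ut k * (Xt k)⁻¹ = ((Xt k)ᴴ)⁻¹ * (Ut k)ᴴ := by
    have h := (isHermitian_mul_inv_of_conjTranspose_mul_comm (hXU k) (hX k)).eq
    rwa [conjTranspose_mul, conjTranspose_nonsing_inv, eq_comm] at h
  have hXk₁ : (Xt (k + 1))ᴴ = (Xt k)ᴴ * D k - (Ut k)ᴴ * B k := by
    rw [eq_conjTranspose_mul_sub_of_symplectic (hrec k) (hS k)]
    simp only [conjTranspose_sub, conjTranspose_mul, conjTranspose_conjTranspose]
  have hD : D k = Ut k * (Xt k)⁻¹ * B k + ((Xt k)ᴴ)⁻¹ * (Xt (k + 1))ᴴ := by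
    rw [hP, hXk₁, Matrix.mul_sub, ← Matrix.mul_assoc, ← Matrix.mul_assoc,
      nonsing_inv_mul _ hdh, Matrix.one_mul]
    abel
  have hDX : D k * ((Xt (k + 1))ᴴ)⁻¹ =
      Ut k * (Xt k)⁻¹ * B k * ((Xt (k + 1))ᴴ)⁻¹ + ((Xt k)ᴴ)⁻¹ := by
    conv_lhs => rw [hD]
    rw [Matrix.add_mul, Matrix.mul_assoc ((Xt k)ᴴ)⁻¹, mul_nonsing_inv _ hdh₁, Matrix.mul_one]
  rw [fromRows_eq_fromBlocks_mul_fromRows_iff]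
  unfold Xhat Uhat
  rw [LamMat_eq_LamMat_succ_add k]
  constructor
  · calc Xt k * (LamMat B Xt (k + 1) + (Xt k)⁻¹ * B k * ((Xt (k + 1))ᴴ)⁻¹)
        = Xt k * LamMat B Xt (k + 1) + B k * ((Xt (k + 1))ᴴ)⁻¹ := by
          rw [Matrix.mul_add, ← Matrix.mul_assoc, ← Matrix.mul_assoc, mul_nonsing_inv _ hd,
            Matrix.one_mul]
      _ = _ := by rw [hXk]; noncomm_ring
  · calc Ut k * (LamMat B Xt (k + 1) + (Xt k)⁻¹ * B k * ((Xt (k + 1))ᴴ)⁻¹) + ((Xt k)ᴴ)⁻¹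
        = Ut k * LamMat B Xt (k + 1) + D k * ((Xt (k + 1))ᴴ)⁻¹ := by rw [hDX]; noncomm_ring
      _ = _ := by rw [hUk]; noncomm_ring

lemma Zsolm_eq_mul_Zsolm_succ
    (hrec : ∀ k, fromRows (Xt k) (Ut k) =
      fromBlocks (A k) (B k) (C k) (D k) * fromRows (Xt (k + 1)) (Ut (k + 1)))
    (hS : ∀ k, (fromBlocks (A k) (B k) (C k) (D k))ᴴ * Jmat n *
      fromBlocks (A k) (B k) (C k) (D k) = Jmat n)
    (hXU : ∀ k, (Xt k)ᴴ * Ut k = (Ut k)ᴴ * Xt k) (hX : ∀ k, IsUnit (Xt k)) (m k : ℕ) :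
    Zsolm B Xt Ut m k = fromBlocks (A k) (B k) (C k) (D k) * Zsolm B Xt Ut m (k + 1) := by
  rw [Zsolm, Zsolm, hrec k, fromRows_Xhat_Uhat_eq_mul hrec hS hXU hX k, Matrix.mul_sub,
    Matrix.mul_assoc]

lemma Zsolm_self {m : ℕ} (hX : IsUnit (Xt m)) (hΛ : (LamMat B Xt m).IsHermitian)
    (hm : IsUnit (LamMat B Xt m)) :
    Zsolm B Xt Ut m m = fromRows 0 (-((Xhat B Xt m)ᴴ)⁻¹) := by
  have hd := (isUnit_iff_isUnit_det _).1 hX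
  have hdΛ := (isUnit_iff_isUnit_det _).1 hm
  have hXhat_inv : (Xhat B Xt m)⁻¹ * Xt m = (LamMat B Xt m)⁻¹ := by
    rw [Xhat, Matrix.mul_inv_rev, Matrix.mul_assoc, nonsing_inv_mul _ hd, Matrix.mul_one]
  have hXhat_conj_inv : ((Xhat B Xt m)ᴴ)⁻¹ = ((Xt m)ᴴ)⁻¹ * (LamMat B Xt m)⁻¹ := by
    rw [Xhat, conjTranspose_mul, Matrix.mul_inv_rev, hΛ.eq]
  rw [Zsolm, hXhat_inv, hXhat_conj_inv, fromRows_mul, fromRows_sub_fromRows, fromRows_ext_iff,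
    Xhat, Uhat, Matrix.mul_assoc, mul_nonsing_inv _ hdΛ, Matrix.mul_one, Matrix.add_mul,
    Matrix.mul_assoc, mul_nonsing_inv _ hdΛ, Matrix.mul_one]
  constructor <;> abel

end DominantSolution

section Inhomogeneous

variable {n : ℕ} (S : ℕ → Matrix (Fin n ⊕ Fin n) (Fin n ⊕ Fin n) ℂ)
  (W : ℕ → Matrix (Fin n) (Fin n) ℂ) (k : ℕ)

lemma Jmat_mulVec_sub_eq_of_solution {l : ℂ} {z z₁ : Fin n ⊕ Fin n → ℂ}
    (hz : z = (S k + l • Vmat S W k) *ᵥ z₁) :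
    Jmat n *ᵥ (z - S k *ᵥ z₁) = PsiMat W k *ᵥ (l • z) := by
  have hPsi : PsiMat W k * (S k + l • Vmat S W k) = PsiMat W k * S k := by
    rw [Matrix.mul_add, Matrix.mul_smul, PsiMat_mul_Vmat, smul_zero, add_zero]
  rw [mulVec_smul, hz, mulVec_mulVec, hPsi, add_mulVec, add_sub_cancel_left, mulVec_mulVec,
    Matrix.mul_smul, Jmat_mul_Vmat, smul_mulVec]

lemma Jmat_mulVec_eq_PsiMat_mulVec_add_forcing (hW : IsUnit (W k)) (l : ℂ)
    (v : Fin n → ℂ) :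
    Jmat n *ᵥ Sum.elim (0 : Fin n → ℂ) (-v) =
      PsiMat W k *ᵥ (l • Sum.elim (0 : Fin n → ℂ) (-v) + Sum.elim (-((W k)⁻¹ *ᵥ v)) 0) := by
  have hd := (isUnit_iff_isUnit_det _).1 hW
  have hsum : l • Sum.elim (0 : Fin n → ℂ) (-v) + Sum.elim (-((W k)⁻¹ *ᵥ v)) 0 =
      Sum.elim (-((W k)⁻¹ *ᵥ v)) (l • -v) := by
    ext (i | i) <;> simp
  rw [hsum, Jmat_mulVec, PsiMat_mulVec]
  simp only [Sum.elim_comp_inl, Sum.elim_comp_inr, mulVec_neg, mulVec_mulVec,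
    mul_nonsing_inv _ hd, one_mulVec, neg_zero]

end Inhomogeneous

theorem statement18_general {n : ℕ}
    (S : ℕ → Matrix (Fin n ⊕ Fin n) (Fin n ⊕ Fin n) ℂ)
    (A B C D W : ℕ → Matrix (Fin n) (Fin n) ℂ)
    (hS : ∀ k, (S k)ᴴ * Jmat n * S k = Jmat n)
    (hblocks : ∀ k, S k = Matrix.fromBlocks (A k) (B k) (C k) (D k))
    (hW : ∀ k, (W k).PosDef)
    (lam : ℝ) (Xt Ut : ℕ → Matrix (Fin n) (Fin n) ℂ)
    (hcb : IsConjoinedBasis S W lam (fun k => Matrix.fromRows (Xt k) (Ut k)))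
    (hXinv : ∀ k, IsUnit (Xt k))
    (m : ℕ) (hm : IsUnit (LamMat B Xt m)) (j : Fin n)
    (z f : ℕ → (Fin n ⊕ Fin n) → ℂ)
    (hzdef : ∀ k, z k = if k ≤ m then Zsolm B Xt Ut m k *ᵥ Pi.single j 1 else 0)
    (hfdef : ∀ k, f k = if k = m then
        Sum.elim (-((W m)⁻¹ *ᵥ (((Xhat B Xt m)ᴴ)⁻¹ *ᵥ Pi.single j 1))) 0 else 0) :
    Zsolm B Xt Ut m m = Matrix.fromRows 0 (-(((Xhat B Xt m)ᴴ)⁻¹)) ∧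
      ∀ k, Jmat n *ᵥ (z k - S k *ᵥ z (k + 1)) =
        PsiMat W k *ᵥ ((lam : ℂ) • z k + f k) := by
  obtain ⟨hsol, hconj⟩ := hcb
  have hSl : ∀ k, S k + (lam : ℂ) • Vmat S W k = fromBlocks (A k) (B k)
      (C k + (lam : ℂ) • (W k * A k)) (D k + (lam : ℂ) • (W k * B k)) := fun k =>
    add_smul_Vmat_eq_fromBlocks W k S (hblocks k) lam
  have hsymp : ∀ k, _ := fun k => hSl k ▸
    symplectic_add_smul_Vmat W k S (hS k) (hW k).isHermitian (Complex.conj_ofReal lam)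
  have hrec : ∀ k, _ := fun k => hSl k ▸ hsol k
  have hXU : ∀ k, (Xt k)ᴴ * Ut k = (Ut k)ᴴ * Xt k := fun k =>
    sub_eq_zero.1 ((conjTranspose_fromRows_mul_Jmat_mul_fromRows _ _).symm.trans (hconj k).2)
  have hZm : Zsolm B Xt Ut m m = fromRows 0 (-((Xhat B Xt m)ᴴ)⁻¹) :=
    Zsolm_self (hXinv m) (isHermitian_LamMat hrec hsymp hXU hXinv m) hm
  refine ⟨hZm, fun k => ?_⟩
  rcases lt_trichotomy k m with hk | rfl | hk
  · rw [hfdef, if_neg hk.ne, add_zero]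
    refine Jmat_mulVec_sub_eq_of_solution S W k ?_
    rw [hzdef, hzdef, if_pos hk.le, if_pos (show k + 1 ≤ m from hk), mulVec_mulVec, hSl,
      ← Zsolm_eq_mul_Zsolm_succ hrec hsymp hXU hXinv]
  · rw [hzdef, hzdef, if_pos le_rfl, if_neg (by omega), hfdef, if_pos rfl, hZm, fromRows_mulVec,
      zero_mulVec, neg_mulVec, mulVec_zero, sub_zero]
    exact Jmat_mulVec_eq_PsiMat_mulVec_add_forcing W k (hW k).isUnit lam _
  · simp [hzdef, hfdef, hk.not_ge, (hk.trans (Nat.lt_succ_self k)).not_ge, hk.ne']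

/-- with `Z^{(m)} = Z̃ − Ẑ X̂_m⁻¹ X̃_m`, `zₖ = Z^{(m)}ₖ e_j` for `k ≤ m` and
`zₖ = 0` for `k > m`, `f_m = (−𝒲_m⁻¹ (X̂_m*)⁻¹ e_j ; 0)` and `fₖ = 0` otherwise, one has
`Z^{(m)}_m = (0; −(X̂_m*)⁻¹)` and `𝒥(zₖ − 𝒮ₖ z_{k+1}) = Ψₖ(λ zₖ + fₖ)` for every `k`. -/
theorem statement18 {n : ℕ} (hn : 1 ≤ n)
    (S : ℕ → Matrix (Fin n ⊕ Fin n) (Fin n ⊕ Fin n) ℂ)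
    (A B C D W : ℕ → Matrix (Fin n) (Fin n) ℂ)
    (hS : ∀ k, (S k)ᴴ * Jmat n * S k = Jmat n)
    (hblocks : ∀ k, S k = Matrix.fromBlocks (A k) (B k) (C k) (D k))
    (hW : ∀ k, (W k).PosDef)
    (lam : ℝ) (Xt Ut : ℕ → Matrix (Fin n) (Fin n) ℂ)
    (hcb : IsConjoinedBasis S W lam (fun k => Matrix.fromRows (Xt k) (Ut k)))
    (hXinv : ∀ k, IsUnit (Xt k))
    (m : ℕ) (hm : IsUnit (LamMat B Xt m)) (j : Fin n)
    (z f : ℕ → (Fin n ⊕ Fin n) → ℂ)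
    (hzdef : ∀ k, z k = if k ≤ m then Zsolm B Xt Ut m k *ᵥ Pi.single j 1 else 0)
    (hfdef : ∀ k, f k = if k = m then
        Sum.elim (-((W m)⁻¹ *ᵥ (((Xhat B Xt m)ᴴ)⁻¹ *ᵥ Pi.single j 1))) 0 else 0) :
    Zsolm B Xt Ut m m = Matrix.fromRows 0 (-(((Xhat B Xt m)ᴴ)⁻¹)) ∧
      ∀ k, Jmat n *ᵥ (z k - S k *ᵥ z (k + 1)) =
        PsiMat W k *ᵥ ((lam : ℂ) • z k + f k) :=
  statement18_general S A B C D W hS hblocks hW lam Xt Ut hcb hXinv m hm j z f hzdef hfdef
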